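/- arXiv:1803.11521 — 4 statements merged into one kernel-verified Lean document; each statement's English description precedes it below -/
import Mathlib

section
/- If Z_1, …, Z_n are i.i.d. standard Gaussian random variables, then for all ε ∈ (0,1), P(|(1/n)∑_{i=1}^n Z_i² − 1| ≥ ε) ≤ 2·exp(−nε²/8). -/
/-!
Each `Z i ^ 2` has moment generating function `t ↦ (1 - 2t)^(-1/2)`, and the elementary
inequality `1 ≤ (1 - u) exp (u + u²)` for `|u| ≤ 1/2` bounds it by `exp (t + 2t²)` when
`|t| ≤ 1/4`. By independence the mgf of `∑ Z i ^ 2` is at most `exp (n t + 2 n t²)`, and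
Chernoff's bound at `t = ± ε/4` gives each tail `{± (∑ Z i ^ 2 - n) ≥ n ε}` probability at most
`exp (-n ε² / 8)`.
-/

open MeasureTheory ProbabilityTheory Real Finset
open scoped ENNReal NNReal

lemma one_le_one_sub_mul_exp_add_sq {u : ℝ} (hu : |u| ≤ 1 / 2) :
    1 ≤ (1 - u) * exp (u + u ^ 2) := by
  rw [abs_le] at hu
  rcases le_or_gt u 0 with hu0 | hu0
  · nlinarith [add_one_le_exp (u + u ^ 2)]
  · nlinarith [quadratic_le_exp_of_nonneg (x := u + u ^ 2) (by positivity), sq_nonneg u]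

lemma inv_sqrt_one_sub_le_exp {u : ℝ} (hu : |u| ≤ 1 / 2) :
    (√(1 - u))⁻¹ ≤ exp ((u + u ^ 2) / 2) := by
  have hpos : 0 < 1 - u := by linarith [(abs_le.mp hu).2]
  have hinv : (1 - u)⁻¹ ≤ exp (u + u ^ 2) :=
    (inv_le_iff_one_le_mul₀' hpos).mpr (one_le_one_sub_mul_exp_add_sq hu)
  calc (√(1 - u))⁻¹ = √((1 - u)⁻¹) := (sqrt_inv _).symm
    _ ≤ √(exp (u + u ^ 2)) := sqrt_le_sqrt hinv
    _ = exp ((u + u ^ 2) / 2) := by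
        rw [sqrt_eq_iff_mul_self_eq_of_pos (exp_pos _), ← exp_add]
        ring_nf

namespace ProbabilityTheory

lemma gaussianPDFReal_zero_mul_exp_mul_sq (v : ℝ≥0) (t x : ℝ) :
    gaussianPDFReal 0 v x * exp (t * x ^ 2)
      = (√(2 * π * v))⁻¹ * exp (-(1 / (2 * v) - t) * x ^ 2) := by
  rw [gaussianPDFReal, mul_assoc, ← exp_add]
  congr 2
  ring

lemma integrable_exp_mul_sq_gaussianReal {v : ℝ≥0} (hv : v ≠ 0) {t : ℝ} (ht : 2 * v * t < 1) :
    Integrable (fun x ↦ exp (t * x ^ 2)) (gaussianReal 0 v) := by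
  have hv' : (0 : ℝ) < v := by positivity
  rw [gaussianReal_of_var_ne_zero _ hv, gaussianPDF_def,
    integrable_withDensity_iff_integrable_smul' (measurable_gaussianPDFReal 0 v).ennreal_ofReal
      (ae_of_all _ fun _ ↦ ENNReal.ofReal_lt_top)]
  simp_rw [ENNReal.toReal_ofReal (gaussianPDFReal_nonneg _ _ _), smul_eq_mul,
    gaussianPDFReal_zero_mul_exp_mul_sq]
  refine (integrable_exp_neg_mul_sq ?_).const_mul _
  rw [sub_pos, lt_div_iff₀ (by positivity)]
  linarith

-- For `1 ≤ 2 * v * t` both sides are junk `0`.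
lemma mgf_sq_gaussianReal {v : ℝ≥0} (hv : v ≠ 0) (t : ℝ) :
    mgf (fun x ↦ x ^ 2) (gaussianReal 0 v) t = (√(1 - 2 * v * t))⁻¹ := by
  have hv' : (0 : ℝ) < v := by positivity
  rw [mgf, integral_gaussianReal_eq_integral_smul hv]
  simp_rw [smul_eq_mul, gaussianPDFReal_zero_mul_exp_mul_sq]
  rw [integral_const_mul, integral_gaussian, ← sqrt_inv, ← sqrt_inv, ← sqrt_mul (by positivity)]
  congr 1
  field_simp

section Chernoff

variable {Ω : Type*} [MeasurableSpace Ω] {μ : Measure Ω} [IsFiniteMeasure μ]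

lemma measureReal_ge_add_le_of_mgf_le {S : Ω → ℝ} {m a s c : ℝ} (hs : 0 ≤ s)
    (hint : Integrable (fun ω ↦ exp (s * S ω)) μ) (hmgf : mgf S μ s ≤ exp (s * m + c * s ^ 2)) :
    μ.real {ω | m + a ≤ S ω} ≤ exp (-s * a + c * s ^ 2) :=
  calc μ.real {ω | m + a ≤ S ω} ≤ exp (-s * (m + a)) * mgf S μ s :=
        measure_ge_le_exp_mul_mgf _ hs hint
    _ ≤ exp (-s * (m + a)) * exp (s * m + c * s ^ 2) := by gcongr
    _ = exp (-s * a + c * s ^ 2) := by rw [← exp_add]; ring_nf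

lemma measure_le_abs_sub_le_of_mgf_le {S : Ω → ℝ} {m a s c : ℝ} (hs : 0 ≤ s)
    (hint : Integrable (fun ω ↦ exp (s * S ω)) μ)
    (hint_neg : Integrable (fun ω ↦ exp (-s * S ω)) μ)
    (hmgf : mgf S μ s ≤ exp (s * m + c * s ^ 2))
    (hmgf_neg : mgf S μ (-s) ≤ exp (-s * m + c * s ^ 2)) :
    μ {ω | a ≤ |S ω - m|} ≤ ENNReal.ofReal (2 * exp (-s * a + c * s ^ 2)) := by
  have hupper := measureReal_ge_add_le_of_mgf_le (a := a) hs hint hmgf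
  have hlower : μ.real {ω | -m + a ≤ (-S) ω} ≤ exp (-s * a + c * s ^ 2) := by
    refine measureReal_ge_add_le_of_mgf_le hs ?_ ?_
    · simpa only [Pi.neg_apply, mul_neg, neg_mul] using hint_neg
    · rwa [mgf_neg, mul_neg, ← neg_mul]
  have hsplit : {ω | a ≤ |S ω - m|} ⊆ {ω | m + a ≤ S ω} ∪ {ω | -m + a ≤ (-S) ω} := by
    intro ω (hω : a ≤ |S ω - m|)
    rcases le_abs'.mp hω with h | h
    · exact Or.inr (show -m + a ≤ -S ω by linarith)
    · exact Or.inl (show m + a ≤ S ω by linarith)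
  rw [← ofReal_measureReal]
  refine ENNReal.ofReal_le_ofReal ?_
  calc μ.real {ω | a ≤ |S ω - m|}
      ≤ μ.real {ω | m + a ≤ S ω} + μ.real {ω | -m + a ≤ (-S) ω} :=
        (measureReal_mono hsplit).trans (measureReal_union_le _ _)
    _ ≤ 2 * exp (-s * a + c * s ^ 2) := by linarith

end Chernoff

section SumOfSquares

variable {Ω : Type*} [MeasurableSpace Ω] {μ : Measure Ω} {v : ℝ≥0}

lemma integrable_exp_mul_sq_of_map_eq_gaussianReal {X : Ω → ℝ}
    (hX : μ.map X = gaussianReal 0 v) (hv : v ≠ 0) {t : ℝ} (ht : 2 * v * t < 1) :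
    Integrable (fun ω ↦ exp (t * X ω ^ 2)) μ := by
  have hXm : AEMeasurable X μ := .of_map_ne_zero (hX ▸ IsProbabilityMeasure.ne_zero _)
  have hf : Measurable fun x : ℝ ↦ exp (t * x ^ 2) := by fun_prop
  exact (integrable_map_measure hf.aestronglyMeasurable hXm).mp
    (hX ▸ integrable_exp_mul_sq_gaussianReal hv ht)

lemma mgf_sq_of_map_eq_gaussianReal {X : Ω → ℝ}
    (hX : μ.map X = gaussianReal 0 v) (hv : v ≠ 0) (t : ℝ) :
    mgf (fun ω ↦ X ω ^ 2) μ t = (√(1 - 2 * v * t))⁻¹ := by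
  have hXm : AEMeasurable X μ := .of_map_ne_zero (hX ▸ IsProbabilityMeasure.ne_zero _)
  rw [← mgf_sq_gaussianReal hv t, ← hX, mgf_map hXm (by fun_prop)]
  rfl

variable {ι : Type*} [Fintype ι] {Z : ι → Ω → ℝ}

lemma iIndepFun.integrable_exp_mul_sum_sq (hindep : iIndepFun Z μ) (hmeas : ∀ i, Measurable (Z i))
    (hgauss : ∀ i, μ.map (Z i) = gaussianReal 0 v) (hv : v ≠ 0) {t : ℝ} (ht : 2 * v * t < 1) :
    Integrable (fun ω ↦ exp (t * ∑ i, Z i ω ^ 2)) μ := by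
  have := hindep.isProbabilityMeasure
  have hsq : iIndepFun (fun i ω ↦ Z i ω ^ 2) μ := hindep.comp _ fun _ ↦ measurable_id.pow_const 2
  simpa only [Finset.sum_apply] using
    hsq.integrable_exp_mul_sum (fun i ↦ (hmeas i).pow_const 2) (s := univ) fun i _ ↦
      integrable_exp_mul_sq_of_map_eq_gaussianReal (hgauss i) hv ht

lemma iIndepFun.mgf_sum_sq (hindep : iIndepFun Z μ) (hmeas : ∀ i, Measurable (Z i))
    (hgauss : ∀ i, μ.map (Z i) = gaussianReal 0 v) (hv : v ≠ 0) (t : ℝ) :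
    mgf (fun ω ↦ ∑ i, Z i ω ^ 2) μ t = (√(1 - 2 * v * t))⁻¹ ^ Fintype.card ι := by
  have hsq : iIndepFun (fun i ω ↦ Z i ω ^ 2) μ := hindep.comp _ fun _ ↦ measurable_id.pow_const 2
  simpa only [Finset.sum_fn, mgf_sq_of_map_eq_gaussianReal (hgauss _) hv t, prod_const,
    card_univ] using hsq.mgf_sum (fun i ↦ (hmeas i).pow_const 2) (t := t) univ

lemma iIndepFun.mgf_sum_sq_le (hindep : iIndepFun Z μ) (hmeas : ∀ i, Measurable (Z i))
    (hgauss : ∀ i, μ.map (Z i) = gaussianReal 0 v) (hv : v ≠ 0) {t : ℝ}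
    (ht : |2 * v * t| ≤ 1 / 2) :
    mgf (fun ω ↦ ∑ i, Z i ω ^ 2) μ t
      ≤ exp (t * (Fintype.card ι * v) + 2 * Fintype.card ι * v ^ 2 * t ^ 2) :=
  calc mgf (fun ω ↦ ∑ i, Z i ω ^ 2) μ t = (√(1 - 2 * v * t))⁻¹ ^ Fintype.card ι :=
        hindep.mgf_sum_sq hmeas hgauss hv t
    _ ≤ exp ((2 * v * t + (2 * v * t) ^ 2) / 2) ^ Fintype.card ι := by
        gcongr
        exact inv_sqrt_one_sub_le_exp ht
    _ = exp (t * (Fintype.card ι * v) + 2 * Fintype.card ι * v ^ 2 * t ^ 2) := by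
        rw [← exp_nat_mul]
        ring_nf

end SumOfSquares

end ProbabilityTheory

/-- Chi-square concentration for i.i.d. standard Gaussians. -/
theorem chi_square_concentration
    {Ω : Type*} [MeasurableSpace Ω] (μ : Measure Ω) [IsProbabilityMeasure μ]
    (n : ℕ) (hn : 0 < n) (Z : Fin n → Ω → ℝ)
    (hmeas : ∀ i, Measurable (Z i))
    (hindep : iIndepFun Z μ)
    (hgauss : ∀ i, Measure.map (Z i) μ = gaussianReal 0 1)
    (ε : ℝ) (hε0 : 0 < ε) (hε1 : ε < 1) :
    μ {ω | ε ≤ |(1 / (n : ℝ)) * ∑ i, (Z i ω) ^ 2 - 1|}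
      ≤ ENNReal.ofReal (2 * Real.exp (-(n : ℝ) * ε ^ 2 / 8)) := by
  have hmgf := hindep.mgf_sum_sq_le hmeas hgauss one_ne_zero (t := ε / 4)
    (by norm_num [abs_div, abs_of_pos hε0]; linarith)
  have hmgf_neg := hindep.mgf_sum_sq_le hmeas hgauss one_ne_zero (t := -(ε / 4))
    (by norm_num [abs_div, abs_of_pos hε0]; linarith)
  simp only [Fintype.card_fin, NNReal.coe_one, mul_one, one_pow, neg_sq] at hmgf hmgf_neg
  have hint := hindep.integrable_exp_mul_sum_sq hmeas hgauss one_ne_zero (t := ε / 4)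
    (by norm_num; linarith)
  have hint_neg := hindep.integrable_exp_mul_sum_sq hmeas hgauss one_ne_zero (t := -(ε / 4))
    (by norm_num; linarith)
  have hrescale : {ω | ε ≤ |(1 / (n : ℝ)) * ∑ i, (Z i ω) ^ 2 - 1|}
      ⊆ {ω | n * ε ≤ |∑ i, Z i ω ^ 2 - n|} := by
    intro ω (hω : ε ≤ _)
    have hn' : (0 : ℝ) < n := Nat.cast_pos.mpr hn
    calc (n : ℝ) * ε ≤ n * |(1 / (n : ℝ)) * ∑ i, (Z i ω) ^ 2 - 1| := by gcongr
      _ = |n * ((1 / (n : ℝ)) * ∑ i, (Z i ω) ^ 2 - 1)| := by rw [abs_mul, abs_of_pos hn']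
      _ = |∑ i, Z i ω ^ 2 - n| := by field_simp
  calc μ {ω | ε ≤ |(1 / (n : ℝ)) * ∑ i, (Z i ω) ^ 2 - 1|}
      ≤ μ {ω | n * ε ≤ |∑ i, Z i ω ^ 2 - n|} := measure_mono hrescale
    _ ≤ ENNReal.ofReal (2 * exp (-(ε / 4) * (n * ε) + 2 * n * (ε / 4) ^ 2)) :=
        measure_le_abs_sub_le_of_mgf_le (by positivity) hint hint_neg hmgf hmgf_neg
    _ = ENNReal.ofReal (2 * exp (-(n : ℝ) * ε ^ 2 / 8)) := by ring_nf
end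

section
/- Let y ∈ ℝ^d be arbitrary and x ∈ ℝ^d a k*-sparse vector with k* ≤ k ≤ d. Let Θ_k(y) denote the best k-sparse approximation of y (keeping the k largest entries in absolute value and zeroing the rest). Then ‖Θ_k(y) − x‖₂ ≤ √ν · ‖y − x‖₂, where ν = 1 + (γ + √((4+γ)γ))/2 and γ = min{k*, d−k}/(k − k* + min{k*, d−k}) (with γ = 0 when the denominator is 0). -/
open Finset

/-- ℓ₀ "norm": number of nonzero entries. -/
noncomputable def l0 {d : ℕ} (v : Fin d → ℝ) : ℕ :=
  (Finset.univ.filter fun i => v i ≠ 0).card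

/-- Euclidean norm of a vector in ℝ^d. -/
noncomputable def norm2 {d : ℕ} (v : Fin d → ℝ) : ℝ :=
  Real.sqrt (∑ i, (v i) ^ 2)

/-- Young-type inequality used in the hard-thresholding proof. -/
lemma young_aux (c u v : ℝ) (hc : 0 < c) :
    (u + v) ^ 2 ≤ (1 + c) * u ^ 2 + (1 + 1 / c) * v ^ 2 := by
  have hne : c ≠ 0 := ne_of_gt hc
  have h1 : (1 + c) * u ^ 2 + (1 + 1 / c) * v ^ 2 - (u + v) ^ 2 = (c * u - v) ^ 2 / c := by
    field_simp
    ring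
  have h2 : 0 ≤ (c * u - v) ^ 2 / c := div_nonneg (sq_nonneg _) hc.le
  linarith

set_option maxHeartbeats 2000000 in
/-- hard-thresholding bound.  `z` is the output of the
hard-thresholding operator Θ_k applied to `y`: it keeps a set `S` of `k`
entries of largest absolute value and zeroes the rest. -/
theorem hard_thresholding_bound
    (d k kstar : ℕ) (hks : kstar ≤ k) (hkd : k ≤ d)
    (y x : Fin d → ℝ) (hx : l0 x ≤ kstar)
    (z : Fin d → ℝ) (S : Finset (Fin d))
    (hScard : S.card = k)
    (hkeep : ∀ i ∈ S, z i = y i)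
    (hzero : ∀ i ∉ S, z i = 0)
    (htop : ∀ i ∈ S, ∀ j ∉ S, |y j| ≤ |y i|)
    (γ ν : ℝ)
    (hγ : γ = if k - kstar + min kstar (d - k) = 0 then 0
        else (min kstar (d - k) : ℝ) / ((k : ℝ) - (kstar : ℝ) + (min kstar (d - k) : ℝ)))
    (hν : ν = 1 + (γ + Real.sqrt ((4 + γ) * γ)) / 2) :
    norm2 (z - x) ≤ Real.sqrt ν * norm2 (y - x) := by
  classical
  set F : Finset (Fin d) := Finset.univ.filter (fun i => x i ≠ 0) with hFdef
  have hxF : ∀ i, i ∉ F → x i = 0 := by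
    intro i hi
    by_contra h
    exact hi (Finset.mem_filter.mpr ⟨Finset.mem_univ i, h⟩)
  have hFcard : F.card ≤ kstar := hx
  set A : Finset (Fin d) := F \ S with hAdef
  set B : Finset (Fin d) := S \ F with hBdef
  set R : ℝ := ∑ i, (y i - x i) ^ 2 with hRdef
  set Z : ℝ := ∑ i, (z i - x i) ^ 2 with hZdef
  have hR0 : 0 ≤ R := Finset.sum_nonneg fun i _ => sq_nonneg _
  -- γ ≥ 0
  have hγ0 : 0 ≤ γ := by
    rw [hγ]
    split_ifs with h
    · exact le_refl 0
    · have h1 : (kstar : ℝ) ≤ (k : ℝ) := by exact_mod_cast hks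
      have h2 : (k : ℝ) ≤ (d : ℝ) := by exact_mod_cast hkd
      have h3 : (0:ℝ) ≤ min (kstar:ℝ) ((d:ℝ) - (k:ℝ)) := le_min (by positivity) (by linarith)
      apply div_nonneg h3
      linarith
  have hs0 : 0 ≤ Real.sqrt ((4 + γ) * γ) := Real.sqrt_nonneg _
  set c₀ : ℝ := (γ + Real.sqrt ((4 + γ) * γ)) / 2 with hc₀def
  have hc₀0 : 0 ≤ c₀ := by positivity
  have hν1 : ν = 1 + c₀ := hν
  have hν0 : 0 ≤ ν := by rw [hν1]; linarith
  -- structural sums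
  have hsplitZ : Z = ∑ i ∈ S, (z i - x i) ^ 2 + ∑ i ∈ Sᶜ, (z i - x i) ^ 2 := by
    rw [hZdef, ← Finset.sum_add_sum_compl S]
  have hsplitR : R = ∑ i ∈ S, (y i - x i) ^ 2 + ∑ i ∈ Sᶜ, (y i - x i) ^ 2 := by
    rw [hRdef, ← Finset.sum_add_sum_compl S]
  have hZS : ∑ i ∈ S, (z i - x i) ^ 2 = ∑ i ∈ S, (y i - x i) ^ 2 :=
    Finset.sum_congr rfl fun i hi => by rw [hkeep i hi]
  have hZSc : ∑ i ∈ Sᶜ, (z i - x i) ^ 2 = ∑ i ∈ Sᶜ, (x i) ^ 2 := by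
    refine Finset.sum_congr rfl fun i hi => ?_
    rw [hzero i (Finset.mem_compl.mp hi)]
    ring
  have hASc : A ⊆ Sᶜ := fun i hi => Finset.mem_compl.mpr (Finset.mem_sdiff.mp hi).2
  have hXA : ∑ i ∈ Sᶜ, (x i) ^ 2 = ∑ i ∈ A, (x i) ^ 2 := by
    refine (Finset.sum_subset hASc ?_).symm
    intro i hi hiA
    have : x i = 0 := by
      apply hxF
      intro hiF
      exact hiA (Finset.mem_sdiff.mpr ⟨hiF, Finset.mem_compl.mp hi⟩)
    rw [this]; ring
  have hZeq : Z = ∑ i ∈ S, (y i - x i) ^ 2 + ∑ i ∈ A, (x i) ^ 2 := by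
    rw [hsplitZ, hZS, hZSc, hXA]
  set P : ℝ := ∑ i ∈ A, (y i - x i) ^ 2 with hPdef
  set Q : ℝ := ∑ i ∈ B, (y i - x i) ^ 2 with hQdef
  have hP0 : 0 ≤ P := Finset.sum_nonneg fun i _ => sq_nonneg _
  have hQ0 : 0 ≤ Q := Finset.sum_nonneg fun i _ => sq_nonneg _
  have hPle : P ≤ ∑ i ∈ Sᶜ, (y i - x i) ^ 2 :=
    Finset.sum_le_sum_of_subset_of_nonneg hASc fun i _ _ => sq_nonneg _
  have hABdisj : Disjoint A B := by
    apply Finset.disjoint_left.mpr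
    intro i hiA hiB
    exact (Finset.mem_sdiff.mp hiA).2 (Finset.mem_sdiff.mp hiB).1
  have hPQR : P + Q ≤ R := by
    have h1 : P + Q = ∑ i ∈ A ∪ B, (y i - x i) ^ 2 := (Finset.sum_union hABdisj).symm
    rw [h1, hRdef]
    exact Finset.sum_le_sum_of_subset_of_nonneg (Finset.subset_univ _)
      fun i _ _ => sq_nonneg _
  -- the main bound Z ≤ ν * R
  have key : Z ≤ ν * R := by
    by_cases hA : A = ∅
    · rw [hZeq, hA]
      simp only [Finset.sum_empty, add_zero]
      have h1 : ∑ i ∈ S, (y i - x i) ^ 2 ≤ R := by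
        rw [hsplitR]
        have : 0 ≤ ∑ i ∈ Sᶜ, (y i - x i) ^ 2 :=
          Finset.sum_nonneg fun i _ => sq_nonneg _
        linarith
      have hν1' : (1:ℝ) ≤ ν := by rw [hν1]; linarith
      calc ∑ i ∈ S, (y i - x i) ^ 2 ≤ R := h1
        _ ≤ ν * R := le_mul_of_one_le_left hR0 hν1'
    · -- A nonempty
      have hAcard : 1 ≤ A.card := Finset.card_pos.mpr (Finset.nonempty_of_ne_empty hA)
      set a : ℕ := A.card with hadef
      set b : ℕ := B.card with hbdef
      -- cardinality relations
      have hc1 : b + (S ∩ F).card = k := by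
        rw [hbdef, hBdef]
        rw [Finset.card_sdiff_add_card_inter]
        exact hScard
      have hc2 : a + (S ∩ F).card ≤ kstar := by
        have : a + (F ∩ S).card = F.card := by
          rw [hadef, hAdef, Finset.card_sdiff_add_card_inter]
        rw [Finset.inter_comm] at this
        omega
      have hab : a + (k - kstar) ≤ b := by omega
      have hb1 : 1 ≤ b := by omega
      -- a ≤ min kstar (d - k)
      have haks : a ≤ kstar := by omega
      have hadk : a ≤ d - k := by
        have h1 : A.card ≤ Sᶜ.card := Finset.card_le_card hASc
        have h2 : Sᶜ.card = d - k := by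
          rw [Finset.card_compl, hScard, Fintype.card_fin]
        omega
      set m : ℕ := min kstar (d - k) with hmdef
      have ham : a ≤ m := le_min haks hadk
      have hm1 : 1 ≤ m := le_trans hAcard ham
      -- γ value
      have hcast : ((m : ℕ) : ℝ) = min (kstar:ℝ) ((d:ℝ) - (k:ℝ)) := by
        rw [hmdef, Nat.cast_min, Nat.cast_sub hkd]
      have hγval : γ = (m : ℝ) / ((k : ℝ) - (kstar : ℝ) + (m : ℝ)) := by
        rw [hγ, if_neg (by omega), ← hcast]
      have hdenpos : 0 < (k : ℝ) - (kstar : ℝ) + (m : ℝ) := by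
        have h1 : (kstar : ℝ) ≤ (k : ℝ) := by exact_mod_cast hks
        have h2 : (1 : ℝ) ≤ (m : ℝ) := by exact_mod_cast hm1
        linarith
      have hγpos : 0 < γ := by
        rw [hγval]
        have hm' : (1:ℝ) ≤ (m:ℝ) := by exact_mod_cast hm1
        exact div_pos (by linarith) hdenpos
      have hspos : 0 < Real.sqrt ((4 + γ) * γ) :=
        Real.sqrt_pos.mpr (mul_pos (by linarith) hγpos)
      have hc₀pos : 0 < c₀ := by rw [hc₀def]; linarith
      -- key identity : (1 + 1/c₀) * γ = c₀
      have hsq : Real.sqrt ((4 + γ) * γ) ^ 2 = (4 + γ) * γ :=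
        Real.sq_sqrt (mul_nonneg (by linarith) hγ0)
      have hident : (1 + 1 / c₀) * γ = c₀ := by
        have h1 : γ * (c₀ + 1) = c₀ ^ 2 := by
          rw [hc₀def]
          linear_combination (-1/4 : ℝ) * hsq
        have hc₀ne : c₀ ≠ 0 := ne_of_gt hc₀pos
        field_simp
        linear_combination h1
      -- a/b ≤ γ
      have hbpos : (0:ℝ) < (b:ℝ) := by exact_mod_cast hb1
      have habγ : (a : ℝ) / (b : ℝ) ≤ γ := by
        rw [hγval, div_le_div_iff₀ hbpos hdenpos]
        have h1 : (a : ℝ) + ((k:ℝ) - (kstar:ℝ)) ≤ (b:ℝ) := by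
          have := hab
          have h2 : ((a + (k - kstar) : ℕ) : ℝ) ≤ (b : ℝ) := by exact_mod_cast this
          push_cast at h2
          rw [Nat.cast_sub hks] at h2
          push_cast at h2
          linarith
        have h2 : (a : ℝ) ≤ (m : ℝ) := by exact_mod_cast ham
        have h3 : (kstar : ℝ) ≤ (k : ℝ) := by exact_mod_cast hks
        have e1 : (a:ℝ) * ((k:ℝ) - (kstar:ℝ)) ≤ (m:ℝ) * ((k:ℝ) - (kstar:ℝ)) :=
          mul_le_mul_of_nonneg_right h2 (by linarith)
        have e2 : (m:ℝ) * ((a:ℝ) + ((k:ℝ) - (kstar:ℝ))) ≤ (m:ℝ) * (b:ℝ) :=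
          mul_le_mul_of_nonneg_left h1 (by positivity)
        nlinarith [e1, e2]
      -- Young's inequality pointwise, then summed
      have hYoung : ∑ i ∈ A, (x i) ^ 2 ≤
          (1 + c₀) * P + (1 + 1 / c₀) * ∑ i ∈ A, (y i) ^ 2 := by
        rw [hPdef, Finset.mul_sum, Finset.mul_sum, ← Finset.sum_add_distrib]
        refine Finset.sum_le_sum fun i _ => ?_
        have h1 := young_aux c₀ (x i - y i) (y i) hc₀pos
        have h2 : (y i - x i) ^ 2 = (x i - y i) ^ 2 := by ring
        rw [h2]
        simpa using h1
      -- ∑_A y² ≤ (a/b) Q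
      have hQy : Q = ∑ j ∈ B, (y j) ^ 2 := by
        refine Finset.sum_congr rfl fun j hj => ?_
        have : x j = 0 := hxF j (Finset.mem_sdiff.mp hj).2
        rw [this]; ring
      have hcomp : ∀ i ∈ A, ∀ j ∈ B, (y i) ^ 2 ≤ (y j) ^ 2 := by
        intro i hi j hj
        have hiS : i ∉ S := (Finset.mem_sdiff.mp hi).2
        have hjS : j ∈ S := (Finset.mem_sdiff.mp hj).1
        have habs := htop j hjS i hiS
        calc (y i) ^ 2 = |y i| ^ 2 := (sq_abs _).symm
          _ ≤ |y j| ^ 2 := by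
              exact pow_le_pow_left₀ (abs_nonneg _) habs 2
          _ = (y j) ^ 2 := sq_abs _
      have hsumcomp : (b : ℝ) * ∑ i ∈ A, (y i) ^ 2 ≤ (a : ℝ) * ∑ j ∈ B, (y j) ^ 2 := by
        have h1 : (b : ℝ) * ∑ i ∈ A, (y i) ^ 2 = ∑ i ∈ A, ∑ j ∈ B, (y i) ^ 2 := by
          rw [Finset.mul_sum]
          refine Finset.sum_congr rfl fun i _ => ?_
          rw [Finset.sum_const, nsmul_eq_mul]
        have h2 : ∑ i ∈ A, ∑ j ∈ B, (y j) ^ 2 = (a : ℝ) * ∑ j ∈ B, (y j) ^ 2 := by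
          rw [Finset.sum_const, nsmul_eq_mul]
        rw [h1, ← h2]
        refine Finset.sum_le_sum fun i hi => Finset.sum_le_sum fun j hj => hcomp i hi j hj
      have hyAQ : ∑ i ∈ A, (y i) ^ 2 ≤ ((a : ℝ) / (b : ℝ)) * Q := by
        rw [hQy, div_mul_eq_mul_div, le_div_iff₀ hbpos]
        linarith [hsumcomp]
      -- combine
      have hyA0 : 0 ≤ ∑ i ∈ A, (y i) ^ 2 := Finset.sum_nonneg fun i _ => sq_nonneg _
      have hfac : 0 ≤ 1 + 1 / c₀ := by positivity
      have hstep : (1 + 1 / c₀) * ∑ i ∈ A, (y i) ^ 2 ≤ c₀ * Q := by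
        calc (1 + 1 / c₀) * ∑ i ∈ A, (y i) ^ 2
            ≤ (1 + 1 / c₀) * (((a : ℝ) / (b : ℝ)) * Q) := by
              exact mul_le_mul_of_nonneg_left hyAQ hfac
          _ ≤ (1 + 1 / c₀) * (γ * Q) := by
              apply mul_le_mul_of_nonneg_left _ hfac
              exact mul_le_mul_of_nonneg_right habγ hQ0
          _ = ((1 + 1 / c₀) * γ) * Q := by ring
          _ = c₀ * Q := by rw [hident]
      have hSbound : ∑ i ∈ S, (y i - x i) ^ 2 ≤ R - P := by
        rw [hsplitR]
        linarith [hPle]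
      rw [hZeq, hν1]
      calc ∑ i ∈ S, (y i - x i) ^ 2 + ∑ i ∈ A, (x i) ^ 2
          ≤ (R - P) + ((1 + c₀) * P + c₀ * Q) := by linarith [hYoung, hstep, hSbound]
        _ = R + c₀ * (P + Q) := by ring
        _ ≤ R + c₀ * R := by
            have := mul_le_mul_of_nonneg_left hPQR hc₀0
            linarith
        _ = (1 + c₀) * R := by ring
  -- conclude
  have hnorm1 : norm2 (z - x) = Real.sqrt Z := by
    rw [norm2, hZdef]
    congr 1
  have hnorm2 : norm2 (y - x) = Real.sqrt R := by
    rw [norm2, hRdef]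
    congr 1
  rw [hnorm1, hnorm2]
  calc Real.sqrt Z ≤ Real.sqrt (ν * R) := Real.sqrt_le_sqrt key
    _ = Real.sqrt ν * Real.sqrt R := Real.sqrt_mul hν0 R
end

section
/- Under the linear model y = Xβ* + ε with ε ~ N(0, σ²I_n) and X of full column rank, if every nonzero coordinate of β* satisfies |β_j*| > (4σ/√λ)·√(log(p)/n^α) for some 0 < λ ≤ λ_min((1/n)XᵀX) and some α ∈ (0,1], then with probability at least 1 − 2p^{1−2n^{1−α}}, the set of indices of the k* largest values of |β̂_j| (where β̂ = (XᵀX)^{-1}Xᵀy is the least squares estimate) is exactly the support S_{β*} = {j : β_j* ≠ 0}, with k* = |S_{β*}|. -/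
open MeasureTheory ProbabilityTheory Matrix Finset

open scoped NNReal

/-!
The error `β̂ - β* = (XᵀX)⁻¹Xᵀε` is a linear image of the Gaussian noise, so its `j`-th
coordinate is sub-Gaussian with variance proxy `σ² ((XᵀX)⁻¹)ⱼⱼ ≤ σ² / (nλ)`, the bound on the
diagonal of the inverse coming from `λ I ≤ XᵀX / n`. For `t = (2σ/√λ) √(log p / n^α)` the
Chernoff bound gives `P(|β̂ⱼ - β*ⱼ| ≥ t) ≤ 2 p^(-2 n^(1-α))`, and a union bound over the `p`
coordinates bounds the probability that some error reaches `t`. Off that event, `|β̂ₗ| < t` when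
`β*ₗ = 0`, while `|β̂ⱼ| > |β*ⱼ| - t > t` when `β*ⱼ ≠ 0`, since `|β*ⱼ| > 2t`.
-/

namespace ProbabilityTheory

variable {Ω : Type*} [MeasurableSpace Ω] {μ : Measure Ω} {X : Ω → ℝ} {c : ℝ≥0}

lemma hasSubgaussianMGF_of_map_eq_gaussianReal {v : ℝ≥0} (hX : μ.map X = gaussianReal 0 v) :
    HasSubgaussianMGF X v μ := by
  have hXm : AEMeasurable X μ := aemeasurable_of_map_neZero (by rw [hX]; infer_instance)
  refine (HasSubgaussianMGF.id_map_iff hXm).1 ?_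
  rw [hX]
  exact ⟨fun t ↦ integrable_exp_mul_gaussianReal t, fun t ↦ by simp [mgf_id_gaussianReal]⟩

namespace HasSubgaussianMGF

lemma mono (h : HasSubgaussianMGF X c μ) {d : ℝ≥0} (hcd : c ≤ d) : HasSubgaussianMGF X d μ :=
  ⟨h.integrable_exp_mul, fun t ↦ (h.mgf_le t).trans <| by gcongr⟩

lemma measureReal_abs_ge_le (h : HasSubgaussianMGF X c μ) {ε : ℝ} (hε : 0 ≤ ε) :
    μ.real {ω | ε ≤ |X ω|} ≤ 2 * Real.exp (-ε ^ 2 / (2 * c)) := by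
  have hsplit : {ω | ε ≤ |X ω|} = {ω | ε ≤ X ω} ∪ {ω | ε ≤ (-X) ω} := by
    ext ω
    simp only [Set.mem_ofPred_eq, Set.mem_union, Pi.neg_apply, le_abs', le_neg, or_comm]
  rw [hsplit, two_mul]
  exact (measureReal_union_le _ _).trans
    (add_le_add (h.measure_ge_le hε) (h.neg.measure_ge_le hε))

end HasSubgaussianMGF

lemma hasSubgaussianMGF_sum_mul_of_iIndepFun {ι : Type*} [Fintype ι] {e : ι → Ω → ℝ}
    (hindep : iIndepFun e μ) {v : ℝ≥0} (hgauss : ∀ i, μ.map (e i) = gaussianReal 0 v)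
    (a : ι → ℝ) :
    HasSubgaussianMGF (fun ω ↦ ∑ i, a i * e i ω) ((∑ i, a i ^ 2).toNNReal * v) μ := by
  have h := HasSubgaussianMGF.sum_of_iIndepFun (s := univ)
    (hindep.comp (fun i x ↦ a i * x) fun i ↦ measurable_const_mul _)
    fun i _ ↦ (hasSubgaussianMGF_of_map_eq_gaussianReal (hgauss i)).const_mul (a i)
  convert h using 1
  · simp
  · ext
    simp only [NNReal.coe_mul, NNReal.coe_sum, Finset.sum_mul,
      Real.coe_toNNReal _ (sum_nonneg fun i _ ↦ sq_nonneg (a i))]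
    rfl

end ProbabilityTheory

namespace Matrix

variable {m n : Type*} [Fintype m] [Fintype n] [DecidableEq n]

lemma inv_gram_mulVec_transpose_mulVec_add {X : Matrix m n ℝ} (hX : IsUnit (Xᵀ * X))
    (β : n → ℝ) (ε : m → ℝ) :
    (Xᵀ * X)⁻¹ *ᵥ (Xᵀ *ᵥ (X *ᵥ β + ε)) = β + ((Xᵀ * X)⁻¹ * Xᵀ) *ᵥ ε := by
  rw [mulVec_add, mulVec_add, mulVec_mulVec, mulVec_mulVec, Matrix.mul_assoc,
    nonsing_inv_mul _ ((isUnit_iff_isUnit_det _).mp hX), one_mulVec, mulVec_mulVec]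

lemma sum_sq_inv_gram_mul_transpose_apply {X : Matrix m n ℝ} (hX : IsUnit (Xᵀ * X)) (j : n) :
    ∑ i, ((Xᵀ * X)⁻¹ * Xᵀ) j i ^ 2 = (Xᵀ * X)⁻¹ j j := by
  have hsymm : ((Xᵀ * X)⁻¹)ᵀ = (Xᵀ * X)⁻¹ := by
    rw [transpose_nonsing_inv, transpose_mul, transpose_transpose]
  have hAAt : ((Xᵀ * X)⁻¹ * Xᵀ) * ((Xᵀ * X)⁻¹ * Xᵀ)ᵀ = (Xᵀ * X)⁻¹ := by
    rw [transpose_mul, hsymm, transpose_transpose, Matrix.mul_assoc, ← Matrix.mul_assoc Xᵀ,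
      mul_nonsing_inv _ ((isUnit_iff_isUnit_det _).mp hX), Matrix.mul_one]
  calc ∑ i, ((Xᵀ * X)⁻¹ * Xᵀ) j i ^ 2 = (((Xᵀ * X)⁻¹ * Xᵀ) * ((Xᵀ * X)⁻¹ * Xᵀ)ᵀ) j j := by
        simp only [mul_apply, transpose_apply, sq]
    _ = (Xᵀ * X)⁻¹ j j := by rw [hAAt]

lemma inv_apply_self_le_of_forall_le_dotProduct {G : Matrix n n ℝ} (hG : IsUnit G) {c lam : ℝ}
    (hc : 0 ≤ c) (hlam0 : 0 < lam)
    (hlam : ∀ v : n → ℝ, lam * ∑ i, v i ^ 2 ≤ v ⬝ᵥ (c • G) *ᵥ v) (j : n) :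
    G⁻¹ j j ≤ c / lam := by
  set w := G⁻¹ *ᵥ Pi.single j 1
  have hGw : G *ᵥ w = Pi.single j 1 := by
    rw [mulVec_mulVec, mul_nonsing_inv _ ((isUnit_iff_isUnit_det _).mp hG), one_mulVec]
  have hwj : w j = G⁻¹ j j := by simp [w, mulVec_single]
  have hquad : lam * G⁻¹ j j ^ 2 ≤ c * G⁻¹ j j := by
    calc lam * G⁻¹ j j ^ 2 = lam * w j ^ 2 := by rw [hwj]
      _ ≤ lam * ∑ i, w i ^ 2 :=
        mul_le_mul_of_nonneg_left (single_le_sum (fun i _ ↦ sq_nonneg (w i)) (mem_univ j))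
          hlam0.le
      _ ≤ w ⬝ᵥ (c • G) *ᵥ w := hlam w
      _ = c * G⁻¹ j j := by rw [smul_mulVec, hGw, dotProduct_smul, dotProduct_single, mul_one,
          hwj, smul_eq_mul]
  rcases le_or_gt (G⁻¹ j j) 0 with hneg | hpos
  · exact hneg.trans (div_nonneg hc hlam0.le)
  · rw [le_div_iff₀ hlam0]
    nlinarith

end Matrix

lemma hasSubgaussianMGF_inv_gram_mul_transpose_mulVec {Ω m n : Type*} [MeasurableSpace Ω]
    {μ : Measure Ω} [Fintype m] [Fintype n] [DecidableEq n] {X : Matrix m n ℝ}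
    (hX : IsUnit (Xᵀ * X)) {c lam : ℝ} (hc : 0 ≤ c) (hlam0 : 0 < lam)
    (hlam : ∀ v : n → ℝ, lam * ∑ i, v i ^ 2 ≤ v ⬝ᵥ (c • (Xᵀ * X)) *ᵥ v)
    {e : m → Ω → ℝ} (hindep : iIndepFun e μ) {v : ℝ≥0}
    (hgauss : ∀ i, μ.map (e i) = gaussianReal 0 v) (j : n) :
    HasSubgaussianMGF (fun ω ↦ (((Xᵀ * X)⁻¹ * Xᵀ) *ᵥ fun i ↦ e i ω) j)
      ((v : ℝ) * (c / lam)).toNNReal μ := by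
  refine (hasSubgaussianMGF_sum_mul_of_iIndepFun hindep hgauss _).mono ?_
  rw [← NNReal.coe_le_coe, NNReal.coe_mul, Real.coe_toNNReal _ (by positivity),
    Real.coe_toNNReal _ (by positivity), sum_sq_inv_gram_mul_transpose_apply hX, mul_comm]
  gcongr
  exact inv_apply_self_le_of_forall_le_dotProduct hX hc hlam0 hlam j

lemma abs_add_lt_abs_add_of_forall_abs_lt {ι : Type*} {b z : ι → ℝ} {t : ℝ}
    (hz : ∀ i, |z i| < t) (hb : ∀ i, b i ≠ 0 → 2 * t < |b i|) {j l : ι} (hj : b j ≠ 0)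
    (hl : b l = 0) : |(b + z) l| < |(b + z) j| := by
  have := abs_sub_abs_le_abs_sub (b j) (-z j)
  rw [abs_neg, sub_neg_eq_add] at this
  simp only [Pi.add_apply, hl, zero_add]
  linarith [hz j, hz l, hb j hj]

lemma exp_neg_threshold_sq_div_eq_rpow {σ lam p n α : ℝ} (hσ : 0 < σ) (hlam : 0 < lam) (hp : 1 ≤ p)
    (hn : 0 < n) :
    Real.exp (-(2 * σ / √lam * √(Real.log p / n ^ α)) ^ 2 / (2 * (σ ^ 2 * (1 / n / lam))))
      = p ^ (-(2 * n ^ (1 - α))) := by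
  rw [Real.rpow_sub hn, Real.rpow_one, mul_pow, div_pow, Real.sq_sqrt hlam.le,
    Real.sq_sqrt (div_nonneg (Real.log_nonneg hp) (by positivity)),
    Real.rpow_def_of_pos (show 0 < p by linarith)]
  congr 1
  have := Real.rpow_pos_of_pos hn α
  field_simp

lemma measureReal_iUnion_le_card_mul {Ω ι : Type*} [MeasurableSpace Ω] {μ : Measure Ω}
    [IsFiniteMeasure μ] [Fintype ι] {s : ι → Set Ω} {b : ℝ} (h : ∀ i, μ.real (s i) ≤ b) :
    μ.real (⋃ i, s i) ≤ Fintype.card ι * b :=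
  calc μ.real (⋃ i, s i) ≤ ∑ i, μ.real (s i) := measureReal_iUnion_fintype_le s
    _ ≤ ∑ _i : ι, b := sum_le_sum fun i _ ↦ h i
    _ = Fintype.card ι * b := by rw [sum_const, card_univ, nsmul_eq_mul]

lemma one_sub_ofReal_le_of_measureReal_compl_le {Ω : Type*} [MeasurableSpace Ω] {μ : Measure Ω}
    [IsProbabilityMeasure μ] {s : Set Ω} {b : ℝ} (h : μ.real sᶜ ≤ b) :
    1 - ENNReal.ofReal b ≤ μ s := by
  rw [tsub_le_iff_right, ← measure_univ (μ := μ), ← Set.union_compl_self s]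
  refine (measure_union_le _ _).trans (add_le_add le_rfl ?_)
  rw [← ofReal_measureReal]
  exact ENNReal.ofReal_le_ofReal h

/-- OLS with thresholding recovers the true support with high
probability (Proposition 2 of the paper).  The event that "the indices of the
k* largest |β̂_j| are exactly the support of β*" is formalized as: every
coordinate of β̂ on the support strictly dominates every coordinate off the
support in absolute value. -/
theorem olsth_true_feature_recovery
    {Ω : Type*} [MeasurableSpace Ω] (μ : Measure Ω) [IsProbabilityMeasure μ]
    (n p : ℕ) (hn : 0 < n) (hp : 0 < p)
    (σ : ℝ) (hσ : 0 < σ)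
    (X : Matrix (Fin n) (Fin p) ℝ)
    (hrank : IsUnit (Xᵀ * X))
    (βstar : Fin p → ℝ)
    (e : Fin n → Ω → ℝ)
    (hindep : iIndepFun e μ)
    (hgauss : ∀ i, Measure.map (e i) μ = gaussianReal 0 ⟨σ ^ 2, by positivity⟩)
    (y : Ω → Fin n → ℝ)
    (hy : ∀ ω, y ω = X *ᵥ βstar + fun i => e i ω)
    (βhat : Ω → Fin p → ℝ)
    (hβhat : ∀ ω, βhat ω = (Xᵀ * X)⁻¹ *ᵥ (Xᵀ *ᵥ y ω))
    (α : ℝ)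
    (lam : ℝ) (hlam0 : 0 < lam)
    (hlam : ∀ v : Fin p → ℝ,
      lam * ∑ i, (v i) ^ 2 ≤ v ⬝ᵥ (((1 / (n : ℝ)) • (Xᵀ * X)) *ᵥ v))
    (hbeta : ∀ j, βstar j ≠ 0 →
      (4 * σ / Real.sqrt lam) * Real.sqrt (Real.log p / (n : ℝ) ^ α) < |βstar j|) :
    1 - ENNReal.ofReal (2 * (p : ℝ) ^ (1 - 2 * (n : ℝ) ^ (1 - α)))
      ≤ μ {ω | ∀ j, βstar j ≠ 0 → ∀ l, βstar l = 0 → |βhat ω l| < |βhat ω j|} := by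
  have hp' : (0 : ℝ) < p := Nat.cast_pos.2 hp
  -- naming the variance avoids rewriting under the anonymous constructor `⟨σ ^ 2, _⟩`
  obtain ⟨v, hvσ, hgauss⟩ : ∃ v : ℝ≥0, (v : ℝ) = σ ^ 2 ∧ ∀ i, μ.map (e i) = gaussianReal 0 v :=
    ⟨_, rfl, hgauss⟩
  set Z : Ω → Fin p → ℝ := fun ω ↦ ((Xᵀ * X)⁻¹ * Xᵀ) *ᵥ fun i ↦ e i ω
  set t := 2 * σ / √lam * √(Real.log p / (n : ℝ) ^ α)
  have hβhat_eq : ∀ ω, βhat ω = βstar + Z ω := fun ω ↦ by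
    rw [hβhat, hy, inv_gram_mulVec_transpose_mulVec_add hrank]
  have htail : ∀ j, μ.real {ω | t ≤ |Z ω j|} ≤ 2 * (p : ℝ) ^ (-(2 * (n : ℝ) ^ (1 - α))) :=
    fun j ↦ by
      have := (hasSubgaussianMGF_inv_gram_mul_transpose_mulVec hrank (by positivity) hlam0 hlam
        hindep hgauss j).measureReal_abs_ge_le (ε := t) (by positivity)
      rwa [Real.coe_toNNReal _ (by positivity), hvσ, exp_neg_threshold_sq_div_eq_rpow hσ hlam0
        (Nat.one_le_cast.2 hp) (Nat.cast_pos.2 hn)] at this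
  have hbad : μ.real (⋃ j, {ω | t ≤ |Z ω j|}) ≤ 2 * (p : ℝ) ^ (1 - 2 * (n : ℝ) ^ (1 - α)) := by
    refine (measureReal_iUnion_le_card_mul htail).trans_eq ?_
    rw [Fintype.card_fin, Real.rpow_neg hp'.le, Real.rpow_sub hp', Real.rpow_one]
    ring
  refine one_sub_ofReal_le_of_measureReal_compl_le ((measureReal_mono ?_).trans hbad)
  refine Set.compl_subset_comm.1 fun ω hω j hj l hl ↦ ?_
  simp only [Set.mem_compl_iff, Set.mem_iUnion, Set.mem_ofPred_eq, not_exists, not_le] at hω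
  rw [hβhat_eq]
  refine abs_add_lt_abs_add_of_forall_abs_lt hω (fun i hi ↦ ?_) hj hl
  convert hbeta i hi using 1
  ring
end

section
/- Let f_i(β) = (1/2)(y_i − x_iᵀβ)² and suppose the online least squares iterates satisfy β_{i+1} = β_i − (XᵀX)_i^{-1}∇f_i(β_i) for i ≥ n_0 (with (XᵀX)_i = ∑_{j≤i} x_j x_jᵀ), Assumption 1 (0 < m ≤ λ_min((1/i)(XᵀX)_i) ≤ λ_max((1/i)(XᵀX)_i) ≤ M for i ≥ n_0) and Assumption 2 (‖β_i − β_j‖ ≤ D and ‖∇f_i(β_i)‖ ≤ G for i,j ≥ n_0). Then (1/n)∑_{i=n_0+1}^{n}(f_i(β_i) − f_i(β̄)) ≤ (G²/(2m))·(log n)/n + (M n_0 D²)/(2n), where β̄ = β_{n+1}; in particular the regret from step n_0+1 to n is O(log(n)/n). -/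
open Matrix Finset

/-!
Against the comparator `β̄ = β (n + 1)` the regret telescopes along the potential
`Tᵢ = (βᵢ₊₁ - β̄)ᵀ Aᵢ (βᵢ₊₁ - β̄)`. The loss is exactly quadratic with Hessian
`xᵢ xᵢᵀ = Aᵢ - Aᵢ₋₁`, so each Newton-type step satisfies the identity
`fᵢ(βᵢ) - fᵢ(β̄) = (Tᵢ₋₁ - Tᵢ) / 2 + gᵢᵀ Aᵢ⁻¹ gᵢ / 2`. The lower eigenvalue bound gives
`gᵢᵀ Aᵢ⁻¹ gᵢ ≤ G² / (m i)`, and `1 / i ≤ log i - log (i - 1)` turns these into `(G² / 2m) log n`;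
what remains of the telescope is `T_{n₀} / 2 ≤ M n₀ D² / 2`, as `T_n = 0`.
-/

section QuadraticForm

variable {R ι : Type*} [CommRing R]

lemma isSymm_sum_vecMulVec_self {κ : Type*} (s : Finset κ) (x : κ → ι → R) :
    (∑ j ∈ s, vecMulVec (x j) (x j)).IsSymm := by
  simp [Matrix.IsSymm, transpose_sum, transpose_vecMulVec]

variable [Fintype ι]

lemma dotProduct_add_vecMulVec_self_mulVec (A : Matrix ι ι R) (u v : ι → R) :
    v ⬝ᵥ ((A + vecMulVec u u) *ᵥ v) = v ⬝ᵥ (A *ᵥ v) + (u ⬝ᵥ v) ^ 2 := by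
  rw [add_mulVec, dotProduct_add, vecMulVec_mulVec, op_smul_eq_smul, dotProduct_smul, smul_eq_mul,
    dotProduct_comm v u, sq]

variable [DecidableEq ι]

lemma mulVec_inv_mulVec {A : Matrix ι ι R} (hA : IsUnit A) (g : ι → R) : A *ᵥ (A⁻¹ *ᵥ g) = g := by
  rw [mulVec_mulVec, mul_nonsing_inv _ ((isUnit_iff_isUnit_det A).mp hA), one_mulVec]

lemma Matrix.IsSymm.dotProduct_sub_inv_mulVec {A : Matrix ι ι R} (hA : A.IsSymm) (hAu : IsUnit A)
    (v g : ι → R) :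
    (v - A⁻¹ *ᵥ g) ⬝ᵥ (A *ᵥ (v - A⁻¹ *ᵥ g))
      = v ⬝ᵥ (A *ᵥ v) - 2 * (g ⬝ᵥ v) + g ⬝ᵥ (A⁻¹ *ᵥ g) := by
  have hswap : (A⁻¹ *ᵥ g) ⬝ᵥ (A *ᵥ v) = g ⬝ᵥ v := by
    rw [dotProduct_mulVec, ← mulVec_transpose, hA.eq, mulVec_inv_mulVec hAu]
  rw [mulVec_sub, mulVec_inv_mulVec hAu, sub_dotProduct, dotProduct_sub, dotProduct_sub, hswap,
    dotProduct_comm v g, dotProduct_comm _ g]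
  ring

end QuadraticForm

section Real

variable {ι : Type*} [Fintype ι] [DecidableEq ι]

lemma dotProduct_inv_mulVec_le {A : Matrix ι ι ℝ} (hA : IsUnit A) {c : ℝ} (hc : 0 < c)
    (hcoer : ∀ v : ι → ℝ, c * ∑ l, v l ^ 2 ≤ v ⬝ᵥ (A *ᵥ v)) (g : ι → ℝ) :
    g ⬝ᵥ (A⁻¹ *ᵥ g) ≤ (∑ l, g l ^ 2) / c := by
  set w := A⁻¹ *ᵥ g
  have hgw : c * ∑ l, w l ^ 2 ≤ g ⬝ᵥ w := by
    simpa only [show A *ᵥ w = g from mulVec_inv_mulVec hA g, dotProduct_comm w g] using hcoer w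
  have hCS : (g ⬝ᵥ w) ^ 2 ≤ (∑ l, g l ^ 2) * ∑ l, w l ^ 2 :=
    sum_mul_sq_le_sq_mul_sq univ g w
  have hg : 0 ≤ ∑ l, g l ^ 2 := by positivity
  rw [le_div_iff₀ hc]
  rcases le_or_gt (g ⬝ᵥ w) 0 with hneg | hpos
  · nlinarith
  · refine le_of_mul_le_mul_right ?_ hpos
    nlinarith [mul_le_mul_of_nonneg_left hgw hg]

theorem half_sq_sub_half_sq_eq_of_step {A A' : Matrix ι ι ℝ} (hA : A.IsSymm) {u : ι → ℝ}
    (hA' : A' = A + vecMulVec u u) (hA'u : IsUnit A') {t : ℝ} {b b' : ι → ℝ}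
    (hb' : b' = b - A'⁻¹ *ᵥ (-(t - u ⬝ᵥ b) • u)) (c : ι → ℝ) :
    1 / 2 * (t - u ⬝ᵥ b) ^ 2 - 1 / 2 * (t - u ⬝ᵥ c) ^ 2
      = ((b - c) ⬝ᵥ (A *ᵥ (b - c)) - (b' - c) ⬝ᵥ (A' *ᵥ (b' - c))) / 2
        + (-(t - u ⬝ᵥ b) • u) ⬝ᵥ (A'⁻¹ *ᵥ (-(t - u ⬝ᵥ b) • u)) / 2 := by
  have hA'symm : A'.IsSymm := by
    rw [hA']
    exact hA.add (by simp [Matrix.IsSymm, transpose_vecMulVec])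
  have hb'c : b' - c = (b - c) - A'⁻¹ *ᵥ (-(t - u ⬝ᵥ b) • u) := by rw [hb']; abel
  rw [hb'c, hA'symm.dotProduct_sub_inv_mulVec hA'u, hA', dotProduct_add_vecMulVec_self_mulVec,
    smul_dotProduct, smul_eq_mul, dotProduct_sub]
  ring

theorem half_sq_sub_half_sq_le_of_step {A A' : Matrix ι ι ℝ} (hA : A.IsSymm) {u : ι → ℝ}
    (hA' : A' = A + vecMulVec u u) (hA'u : IsUnit A') {t : ℝ} {b b' : ι → ℝ}
    (hb' : b' = b - A'⁻¹ *ᵥ (-(t - u ⬝ᵥ b) • u)) (c : ι → ℝ) {κ G : ℝ} (hκ : 0 < κ)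
    (hcoer : ∀ v : ι → ℝ, κ * ∑ l, v l ^ 2 ≤ v ⬝ᵥ (A' *ᵥ v))
    (hG : ∑ l, (-(t - u ⬝ᵥ b) * u l) ^ 2 ≤ G ^ 2) :
    1 / 2 * (t - u ⬝ᵥ b) ^ 2 - 1 / 2 * (t - u ⬝ᵥ c) ^ 2
      ≤ ((b - c) ⬝ᵥ (A *ᵥ (b - c)) - (b' - c) ⬝ᵥ (A' *ᵥ (b' - c))) / 2 + G ^ 2 / (2 * κ) := by
  have hgrad := dotProduct_inv_mulVec_le hA'u hκ hcoer (-(t - u ⬝ᵥ b) • u)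
  have hG' : (∑ l, (-(t - u ⬝ᵥ b) * u l) ^ 2) / κ ≤ G ^ 2 / κ := by gcongr
  rw [half_sq_sub_half_sq_eq_of_step hA hA' hA'u hb' c, mul_comm 2 κ, ← div_div]
  simp only [Pi.smul_apply, smul_eq_mul] at hgrad
  linarith

lemma sum_Icc_le_sub_of_le_sub {F S : ℕ → ℝ} {a b : ℕ} (hab : a ≤ b)
    (h : ∀ j, a ≤ j → j < b → F (j + 1) ≤ S j - S (j + 1)) :
    ∑ i ∈ Icc (a + 1) b, F i ≤ S a - S b := by
  induction b, hab using Nat.le_induction with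
  | base => simp
  | succ b hab ih =>
    rw [sum_Icc_succ_top (by omega)]
    linarith [ih fun j hj hjb => h j hj (by omega), h b hab (by omega)]

lemma one_div_succ_le_log_sub {j : ℕ} (hj : 0 < j) :
    1 / ((j : ℝ) + 1) ≤ Real.log ((j : ℝ) + 1) - Real.log j := by
  have hj' : (0 : ℝ) < j := by exact_mod_cast hj
  have h := Real.one_sub_inv_le_log_of_pos (x := ((j : ℝ) + 1) / j) (by positivity)
  rwa [Real.log_div (by positivity) hj'.ne', inv_div, one_sub_div (by positivity),
    add_sub_cancel_left] at h

theorem online_ls_step_le {x : ℕ → ι → ℝ} {y : ℕ → ℝ} {β : ℕ → ι → ℝ}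
    {A : ℕ → Matrix ι ι ℝ} (hA : ∀ i, A i = ∑ j ∈ Icc 1 i, vecMulVec (x j) (x j))
    {j : ℕ} (hj : 0 < j) (hinv : IsUnit (A (j + 1)))
    (hrec : β (j + 2) =
      β (j + 1) - (A (j + 1))⁻¹ *ᵥ (-(y (j + 1) - x (j + 1) ⬝ᵥ β (j + 1)) • x (j + 1)))
    {m G : ℝ} (hm : 0 < m)
    (hcoer : ∀ v : ι → ℝ, m * ↑(j + 1) * ∑ l, v l ^ 2 ≤ v ⬝ᵥ (A (j + 1) *ᵥ v))
    (hG : ∑ l, (-(y (j + 1) - x (j + 1) ⬝ᵥ β (j + 1)) * x (j + 1) l) ^ 2 ≤ G ^ 2)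
    (c : ι → ℝ) :
    1 / 2 * (y (j + 1) - x (j + 1) ⬝ᵥ β (j + 1)) ^ 2 - 1 / 2 * (y (j + 1) - x (j + 1) ⬝ᵥ c) ^ 2
      ≤ ((β (j + 1) - c) ⬝ᵥ (A j *ᵥ (β (j + 1) - c)) / 2 - G ^ 2 / (2 * m) * Real.log j)
        - ((β (j + 2) - c) ⬝ᵥ (A (j + 1) *ᵥ (β (j + 2) - c)) / 2
          - G ^ 2 / (2 * m) * Real.log ↑(j + 1)) := by
  have hsucc : A (j + 1) = A j + vecMulVec (x (j + 1)) (x (j + 1)) := by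
    rw [hA, hA, sum_Icc_succ_top (by omega)]
  have hstep := half_sq_sub_half_sq_le_of_step (hA j ▸ isSymm_sum_vecMulVec_self _ _) hsucc
    hinv hrec c (by positivity) hcoer hG
  have hlog := mul_le_mul_of_nonneg_left (one_div_succ_le_log_sub hj)
    (by positivity : 0 ≤ G ^ 2 / (2 * m))
  have hK : G ^ 2 / (2 * (m * ((j : ℝ) + 1))) = G ^ 2 / (2 * m) * (1 / ((j : ℝ) + 1)) := by
    rw [mul_one_div, div_div, mul_assoc]
  push_cast at hstep ⊢
  linarith

end Real

/-- logarithmic regret of online least squares (Proposition 9 of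
the paper), from step n₀+1 to n.  Observations are 1-indexed. -/
theorem online_ls_regret
    (p : ℕ) (x : ℕ → (Fin p → ℝ)) (y : ℕ → ℝ) (β : ℕ → (Fin p → ℝ))
    (f : ℕ → (Fin p → ℝ) → ℝ)
    (hf : ∀ i b, f i b = (1 / 2) * (y i - x i ⬝ᵥ b) ^ 2)
    (A : ℕ → Matrix (Fin p) (Fin p) ℝ)
    (hA : ∀ i : ℕ, A i = ∑ j ∈ Finset.Icc 1 i, Matrix.vecMulVec (x j) (x j))
    (n₀ n : ℕ) (hpn₀ : p < n₀) (hn : n₀ < n)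
    (hinv : ∀ i, n₀ ≤ i → IsUnit (A i))
    (hrec : ∀ i, n₀ ≤ i →
      β (i + 1) = β i - (A i)⁻¹ *ᵥ (-(y i - x i ⬝ᵥ β i) • x i))
    (m M : ℝ) (hm : 0 < m) (hmM : m ≤ M)
    -- Assumption 1: eigenvalue bounds on (1/i)(XᵀX)_i, as quadratic forms
    (hAeig : ∀ i, n₀ ≤ i → ∀ v : Fin p → ℝ,
      m * ∑ l, (v l) ^ 2 ≤ (1 / (i : ℝ)) * (v ⬝ᵥ (A i *ᵥ v)) ∧
      (1 / (i : ℝ)) * (v ⬝ᵥ (A i *ᵥ v)) ≤ M * ∑ l, (v l) ^ 2)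
    -- Assumption 2: bounded iterates and gradients
    (D G : ℝ)
    (hD : ∀ i j, n₀ ≤ i → n₀ ≤ j →
      Real.sqrt (∑ l, (β i l - β j l) ^ 2) ≤ D)
    (hG : ∀ i, n₀ ≤ i →
      Real.sqrt (∑ l, ((-(y i - x i ⬝ᵥ β i)) * x i l) ^ 2) ≤ G) :
    (1 / (n : ℝ)) * ∑ i ∈ Finset.Icc (n₀ + 1) n, (f i (β i) - f i (β (n + 1)))
      ≤ G ^ 2 / (2 * m) * Real.log n / n + M * n₀ * D ^ 2 / (2 * n) := by
  have hn₀ : (0 : ℝ) < n₀ := by exact_mod_cast (by omega : 0 < n₀)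
  set B := β (n + 1)
  set K := G ^ 2 / (2 * m)
  set T : ℕ → ℝ := fun i => (β (i + 1) - B) ⬝ᵥ (A i *ᵥ (β (i + 1) - B))
  have hcoer : ∀ i, n₀ ≤ i → ∀ v : Fin p → ℝ, m * i * ∑ l, v l ^ 2 ≤ v ⬝ᵥ (A i *ᵥ v) := by
    intro i hi v
    have h := (hAeig i hi v).1
    rwa [one_div_mul_eq_div, le_div_iff₀ (by exact_mod_cast (by omega : 0 < i)),
      mul_right_comm] at h
  have hsum := sum_Icc_le_sub_of_le_sub (F := fun i => f i (β i) - f i B)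
    (S := fun i => T i / 2 - K * Real.log i) hn.le fun j hj _ => by
      simpa only [hf] using online_ls_step_le hA (by omega) (hinv _ (by omega))
        (hrec _ (by omega)) hm (hcoer _ (by omega)) (Real.sqrt_le_iff.1 (hG _ (by omega))).2 B
  have hTn : T n = 0 := by simp [T, B]
  have hTn₀ : T n₀ ≤ M * n₀ * D ^ 2 := by
    have hδ := (Real.sqrt_le_iff.1 (hD (n₀ + 1) (n + 1) (by omega) (by omega))).2
    have h := (hAeig n₀ le_rfl (β (n₀ + 1) - B)).2
    rw [one_div_mul_eq_div, div_le_iff₀ hn₀, mul_right_comm] at h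
    exact h.trans (mul_le_mul_of_nonneg_left hδ (mul_nonneg (hm.le.trans hmM) hn₀.le))
  have hlog₀ : 0 ≤ Real.log n₀ := Real.log_nonneg (by exact_mod_cast (by omega : 1 ≤ n₀))
  calc (1 / (n : ℝ)) * ∑ i ∈ Icc (n₀ + 1) n, (f i (β i) - f i B)
      ≤ (1 / (n : ℝ)) * (M * n₀ * D ^ 2 / 2 + K * Real.log n) := by
        gcongr
        simp only [hTn] at hsum
        nlinarith [(by positivity : 0 ≤ K)]
    _ = K * Real.log n / n + M * n₀ * D ^ 2 / (2 * n) := by ring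
end
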